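/- arXiv:2107.11939 — 7 statements merged into one kernel-verified Lean document; each statement's English description precedes it below -/
import Mathlib

section
/- Let W : ℕ → (Δ → ℝ) be the finite-horizon value functions defined by W₀ ≡ 0 and W_{n+1}(ω) = max( ω·B + β Σ_{k<K} ω_k W_n(p_k), m + β W_n(ωP) ). Then for every n ∈ ℕ and all ω₁, ω₂ ∈ Δ, |W_n(ω₁) − W_n(ω₂)| ≤ B_max · (1 − β^n)/(1 − β) · Σ_i |ω₁,ᵢ − ω₂,ᵢ|, where B_max = max_i B_i. -/
/-!
The Bellman operator maps an `L`-Lipschitz value function (for the ℓ¹-distance on the simplex)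
to a `(B_max + β L)`-Lipschitz one, so induction gives the constants
`L_{n+1} = B_max + β L_n`, `L_0 = 0`, i.e. `L_n = B_max (1 - βⁿ)/(1 - β)`.
For the active arm the key point is that `ω₁ - ω₂` has zero sum, so `|(ω₁ - ω₂) ⬝ g|` is at
most half the oscillation of `g` times `‖ω₁ - ω₂‖₁`; the oscillation is at most `2 B_max` for the
reward `B` and at most `2 L_n` for `k ↦ W_n(p_k)`, the ℓ¹-diameter of the simplex being `2`.
For the passive arm, `ω ↦ ωP` is an ℓ¹-contraction.
-/

open Matrix

lemma exists_forall_abs_sub_le_half {ι : Type*} [Finite ι] {f : ι → ℝ} {M : ℝ}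
    (hf : ∀ i j, f i - f j ≤ M) : ∃ c, ∀ i, |f i - c| ≤ M / 2 := by
  cases isEmpty_or_nonempty ι
  · exact ⟨0, isEmptyElim⟩
  obtain ⟨j, hj⟩ := Finite.exists_max f
  obtain ⟨l, hl⟩ := Finite.exists_min f
  refine ⟨(f j + f l) / 2, fun i => abs_le.2 ⟨?_, ?_⟩⟩
  · linarith [hf j l, hl i]
  · linarith [hf j l, hj i]

lemma abs_sum_mul_le_of_sum_eq_zero {ι : Type*} [Fintype ι] {d f : ι → ℝ}
    (hd : ∑ i, d i = 0) {M : ℝ} (hf : ∀ i j, f i - f j ≤ M) :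
    |∑ i, d i * f i| ≤ M / 2 * ∑ i, |d i| := by
  obtain ⟨c, hc⟩ := exists_forall_abs_sub_le_half hf
  have hcentre : ∑ i, d i * f i = ∑ i, d i * (f i - c) := by
    simp only [mul_sub, Finset.sum_sub_distrib, ← Finset.sum_mul, hd, zero_mul, sub_zero]
  calc |∑ i, d i * f i| = |∑ i, d i * (f i - c)| := by rw [hcentre]
    _ ≤ ∑ i, |d i| * (M / 2) := by
      refine (Finset.abs_sum_le_sum_abs _ _).trans (Finset.sum_le_sum fun i _ => ?_)
      rw [abs_mul]
      exact mul_le_mul_of_nonneg_left (hc i) (abs_nonneg _)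
    _ = M / 2 * ∑ i, |d i| := by rw [← Finset.sum_mul, mul_comm]

section stdSimplex

variable {ι : Type*} [Fintype ι] {x y : ι → ℝ}

lemma sum_abs_sub_le_two (hx : x ∈ stdSimplex ℝ ι) (hy : y ∈ stdSimplex ℝ ι) :
    ∑ i, |x i - y i| ≤ 2 := by
  calc ∑ i, |x i - y i| ≤ ∑ i, (x i + y i) := by
        refine Finset.sum_le_sum fun i _ => ?_
        simpa [abs_of_nonneg (hx.1 i), abs_of_nonneg (hy.1 i)] using abs_sub (x i) (y i)
    _ = 2 := by rw [Finset.sum_add_distrib, hx.2, hy.2]; norm_num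

lemma abs_dotProduct_sub_dotProduct_le (hx : x ∈ stdSimplex ℝ ι) (hy : y ∈ stdSimplex ℝ ι)
    {g : ι → ℝ} {M : ℝ} (hg : ∀ i j, g i - g j ≤ M) :
    |x ⬝ᵥ g - y ⬝ᵥ g| ≤ M / 2 * ∑ i, |x i - y i| := by
  rw [← sub_dotProduct]
  refine abs_sum_mul_le_of_sum_eq_zero ?_ hg
  simp only [Pi.sub_apply, Finset.sum_sub_distrib, hx.2, hy.2, sub_self]

variable [DecidableEq ι] {P : Matrix ι ι ℝ}

lemma Matrix.row_mem_stdSimplex (hP : P ∈ rowStochastic ℝ ι) (i : ι) :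
    P i ∈ stdSimplex ℝ ι :=
  ⟨fun j => hP.1 i j, sum_row_of_mem_rowStochastic hP i⟩

lemma Matrix.vecMul_mem_stdSimplex (hP : P ∈ rowStochastic ℝ ι) (hx : x ∈ stdSimplex ℝ ι) :
    x ᵥ* P ∈ stdSimplex ℝ ι := by
  refine ⟨nonneg_vecMul_of_mem_rowStochastic hP hx.1, ?_⟩
  have := vecMul_dotProduct_one_eq_one_rowStochastic hP (by rw [dotProduct_one, hx.2])
  rwa [dotProduct_one] at this

lemma Matrix.sum_abs_vecMul_sub_vecMul_le (hP : P ∈ rowStochastic ℝ ι) :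
    ∑ j, |(x ᵥ* P) j - (y ᵥ* P) j| ≤ ∑ i, |x i - y i| := by
  calc ∑ j, |(x ᵥ* P) j - (y ᵥ* P) j| = ∑ j, |∑ i, (x i - y i) * P i j| := by
        simp only [vecMul, dotProduct, sub_mul, Finset.sum_sub_distrib]
    _ ≤ ∑ j, ∑ i, |x i - y i| * P i j := by
      refine Finset.sum_le_sum fun j _ => (Finset.abs_sum_le_sum_abs _ _).trans_eq ?_
      simp only [abs_mul, abs_of_nonneg (hP.1 _ j)]
    _ = ∑ i, |x i - y i| := by
      rw [Finset.sum_comm]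
      simp only [← Finset.mul_sum, sum_row_of_mem_rowStochastic hP, mul_one]

end stdSimplex

def L1LipschitzOnStdSimplex {ι : Type*} [Fintype ι] (L : ℝ) (V : (ι → ℝ) → ℝ) : Prop :=
  ∀ x ∈ stdSimplex ℝ ι, ∀ y ∈ stdSimplex ℝ ι, |V x - V y| ≤ L * ∑ i, |x i - y i|

namespace L1LipschitzOnStdSimplex

variable {ι : Type*} [Fintype ι] {L : ℝ} {V : (ι → ℝ) → ℝ}

lemma congr {U : (ι → ℝ) → ℝ} (hV : L1LipschitzOnStdSimplex L V)
    (hUV : ∀ x ∈ stdSimplex ℝ ι, U x = V x) : L1LipschitzOnStdSimplex L U := by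
  intro x hx y hy
  rw [hUV x hx, hUV y hy]
  exact hV x hx y hy

lemma mono {L' : ℝ} (hV : L1LipschitzOnStdSimplex L V) (hLL' : L ≤ L') :
    L1LipschitzOnStdSimplex L' V := fun x hx y hy =>
  (hV x hx y hy).trans
    (mul_le_mul_of_nonneg_right hLL' (Finset.sum_nonneg fun _ _ => abs_nonneg _))

lemma max {U : (ι → ℝ) → ℝ} (hV : L1LipschitzOnStdSimplex L V)
    (hU : L1LipschitzOnStdSimplex L U) : L1LipschitzOnStdSimplex L fun x => max (V x) (U x) :=
  fun x hx y hy =>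
    (abs_max_sub_max_le_max _ _ _ _).trans (max_le (hV x hx y hy) (hU x hx y hy))

variable [DecidableEq ι] {P : Matrix ι ι ℝ} {β : ℝ}

lemma dotProduct_add_mul_sum_row (hP : P ∈ rowStochastic ℝ ι) (hβ : 0 ≤ β) (hL : 0 ≤ L)
    (hV : L1LipschitzOnStdSimplex L V) {B : ι → ℝ} {Bmax : ℝ} (hB : ∀ i, |B i| ≤ Bmax) :
    L1LipschitzOnStdSimplex (Bmax + β * L) fun x => x ⬝ᵥ B + β * ∑ k, x k * V (P k) := by
  intro x hx y hy
  have hreward : |x ⬝ᵥ B - y ⬝ᵥ B| ≤ 2 * Bmax / 2 * ∑ i, |x i - y i| :=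
    abs_dotProduct_sub_dotProduct_le hx hy fun i j => by
      linarith [(abs_le.1 (hB i)).2, (abs_le.1 (hB j)).1]
  set g : ι → ℝ := fun k => V (P k)
  have hcontinuation : |x ⬝ᵥ g - y ⬝ᵥ g| ≤ 2 * L / 2 * ∑ i, |x i - y i| := by
    refine abs_dotProduct_sub_dotProduct_le hx hy fun j l => (le_abs_self _).trans ?_
    calc |V (P j) - V (P l)| ≤ L * ∑ i, |P j i - P l i| :=
          hV _ (row_mem_stdSimplex hP j) _ (row_mem_stdSimplex hP l)
      _ ≤ 2 * L := by
        nlinarith [sum_abs_sub_le_two (row_mem_stdSimplex hP j) (row_mem_stdSimplex hP l)]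
  show |x ⬝ᵥ B + β * x ⬝ᵥ g - (y ⬝ᵥ B + β * y ⬝ᵥ g)| ≤ _
  calc _ = |(x ⬝ᵥ B - y ⬝ᵥ B) + β * (x ⬝ᵥ g - y ⬝ᵥ g)| := by ring_nf
    _ ≤ |x ⬝ᵥ B - y ⬝ᵥ B| + β * |x ⬝ᵥ g - y ⬝ᵥ g| := by
        refine (abs_add_le _ _).trans_eq ?_
        rw [abs_mul, abs_of_nonneg hβ]
    _ ≤ 2 * Bmax / 2 * ∑ i, |x i - y i| + β * (2 * L / 2 * ∑ i, |x i - y i|) := by gcongr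
    _ = (Bmax + β * L) * ∑ i, |x i - y i| := by ring

lemma const_add_mul_vecMul (hP : P ∈ rowStochastic ℝ ι) (hβ : 0 ≤ β) (hL : 0 ≤ L)
    (hV : L1LipschitzOnStdSimplex L V) (m : ℝ) :
    L1LipschitzOnStdSimplex (β * L) fun x => m + β * V (x ᵥ* P) := by
  intro x hx y hy
  calc |m + β * V (x ᵥ* P) - (m + β * V (y ᵥ* P))| = β * |V (x ᵥ* P) - V (y ᵥ* P)| := by
        rw [add_sub_add_left_eq_sub, ← mul_sub, abs_mul, abs_of_nonneg hβ]
    _ ≤ β * (L * ∑ j, |(x ᵥ* P) j - (y ᵥ* P) j|) := by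
        gcongr
        exact hV _ (vecMul_mem_stdSimplex hP hx) _ (vecMul_mem_stdSimplex hP hy)
    _ ≤ β * L * ∑ i, |x i - y i| := by
        rw [mul_assoc]
        exact mul_le_mul_of_nonneg_left
          (mul_le_mul_of_nonneg_left (sum_abs_vecMul_sub_vecMul_le hP) hL) hβ

end L1LipschitzOnStdSimplex

lemma l1LipschitzOnStdSimplex_bellman {ι : Type*} [Fintype ι] [DecidableEq ι]
    {P : Matrix ι ι ℝ} (hP : P ∈ rowStochastic ℝ ι) {β : ℝ} (hβ : 0 ≤ β)
    {L : ℝ} (hL : 0 ≤ L) {V : (ι → ℝ) → ℝ} (hV : L1LipschitzOnStdSimplex L V)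
    {B : ι → ℝ} {Bmax : ℝ} (hB : ∀ i, |B i| ≤ Bmax) (hBmax : 0 ≤ Bmax) (m : ℝ) :
    L1LipschitzOnStdSimplex (Bmax + β * L) fun x =>
      max (x ⬝ᵥ B + β * ∑ k, x k * V (P k)) (m + β * V (x ᵥ* P)) :=
  (hV.dotProduct_add_mul_sum_row hP hβ hL hB).max
    ((hV.const_add_mul_vecMul hP hβ hL m).mono (le_add_of_nonneg_left hBmax))

theorem finite_horizon_lipschitz_general (K : ℕ)
    (P : Matrix (Fin K) (Fin K) ℝ)
    (hPnn : ∀ i j, 0 ≤ P i j) (hProw : ∀ i, ∑ j, P i j = 1)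
    (B : Fin K → ℝ) (hB : ∀ i, 0 ≤ B i)
    (β : ℝ) (hβ₀ : 0 < β) (hβ₁ : β < 1) (m : ℝ)
    (W : ℕ → (Fin K → ℝ) → ℝ)
    (hW0 : ∀ ω ∈ stdSimplex ℝ (Fin K), W 0 ω = 0)
    (hWrec : ∀ n, ∀ ω ∈ stdSimplex ℝ (Fin K),
      W (n + 1) ω = max (ω ⬝ᵥ B + β * ∑ k, ω k * W n (P k)) (m + β * W n (ω ᵥ* P)))
    (Bmax : ℝ) (hBmax : IsGreatest (Set.range B) Bmax) :
    ∀ n : ℕ, ∀ ω₁ ∈ stdSimplex ℝ (Fin K), ∀ ω₂ ∈ stdSimplex ℝ (Fin K),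
      |W n ω₁ - W n ω₂| ≤ Bmax * ((1 - β ^ n) / (1 - β)) * ∑ i, |ω₁ i - ω₂ i| := by
  have hP : P ∈ rowStochastic ℝ (Fin K) := mem_rowStochastic_iff_sum.2 ⟨hPnn, hProw⟩
  have hBabs : ∀ i, |B i| ≤ Bmax := fun i => (abs_of_nonneg (hB i)).trans_le (hBmax.2 ⟨i, rfl⟩)
  have hBmax₀ : 0 ≤ Bmax := let ⟨i, hi⟩ := hBmax.1; hi ▸ hB i
  intro n
  induction n with
  | zero =>
    intro ω₁ h₁ ω₂ h₂
    simp [hW0 ω₁ h₁, hW0 ω₂ h₂]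
  | succ n ih =>
    have hL : 0 ≤ Bmax * ((1 - β ^ n) / (1 - β)) := mul_nonneg hBmax₀
      (div_nonneg (sub_nonneg.2 (pow_le_one₀ hβ₀.le hβ₁.le)) (sub_pos.2 hβ₁).le)
    have hstep : Bmax * ((1 - β ^ (n + 1)) / (1 - β)) =
        Bmax + β * (Bmax * ((1 - β ^ n) / (1 - β))) := by
      field_simp [(sub_pos.2 hβ₁).ne']
      ring
    rw [hstep]
    exact (l1LipschitzOnStdSimplex_bellman hP hβ₀.le hL ih hBabs hBmax₀ m).congr (hWrec n)

/-- The finite-horizon value functions are Lipschitz in the belief state with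
constant `B_max · (1 − β^n)/(1 − β)` with respect to the ℓ¹-distance. -/
theorem finite_horizon_lipschitz (K : ℕ) (hK : 1 ≤ K)
    (P : Matrix (Fin K) (Fin K) ℝ)
    (hPnn : ∀ i j, 0 ≤ P i j) (hProw : ∀ i, ∑ j, P i j = 1)
    (B : Fin K → ℝ) (hB : ∀ i, 0 ≤ B i)
    (β : ℝ) (hβ₀ : 0 < β) (hβ₁ : β < 1) (m : ℝ)
    (W : ℕ → (Fin K → ℝ) → ℝ)
    (hW0 : ∀ ω ∈ stdSimplex ℝ (Fin K), W 0 ω = 0)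
    (hWrec : ∀ n, ∀ ω ∈ stdSimplex ℝ (Fin K),
      W (n + 1) ω = max (ω ⬝ᵥ B + β * ∑ k, ω k * W n (P k)) (m + β * W n (ω ᵥ* P)))
    (Bmax : ℝ) (hBmax : IsGreatest (Set.range B) Bmax) :
    ∀ n : ℕ, ∀ ω₁ ∈ stdSimplex ℝ (Fin K), ∀ ω₂ ∈ stdSimplex ℝ (Fin K),
      |W n ω₁ - W n ω₂| ≤ Bmax * ((1 - β ^ n) / (1 - β)) * ∑ i, |ω₁ i - ω₂ i| :=
  finite_horizon_lipschitz_general K P hPnn hProw B hB β hβ₀ hβ₁ m W hW0 hWrec Bmax hBmax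
end

section
/- Let V be a bounded function on Δ satisfying the Bellman equation for subsidy m. Then V is convex on Δ: for all ω₁, ω₂ ∈ Δ and all t ∈ [0,1], V(t ω₁ + (1−t) ω₂) ≤ t V(ω₁) + (1−t) V(ω₂). -/
/-!
Call `sup (V(a x + b y) - a V x - b V y)` over the simplex the convexity defect of `V`. The
right-hand side of the Bellman equation is the maximum of a linear function of `ω` and of
`m + β V(ωP)`, where `ω ↦ ωP` is linear and preserves the simplex; so if `V` has defect at most
`ε`, the right-hand side has defect at most `β ε`. A bounded fixed point `|V| ≤ C` starts with
defect at most `2C`, hence has defect at most `2C βⁿ` for every `n`, i.e. none at all.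
-/

open Matrix Set Filter Topology

section ApproxConvex

variable {E F : Type*} [AddCommGroup E] [Module ℝ E] [AddCommGroup F] [Module ℝ F]
  {s : Set E} {f g : E → ℝ} {ε : ℝ}

def ApproxConvexOn (ε : ℝ) (s : Set E) (f : E → ℝ) : Prop :=
  ∀ ⦃x⦄, x ∈ s → ∀ ⦃y⦄, y ∈ s → ∀ ⦃a b : ℝ⦄, 0 ≤ a → 0 ≤ b → a + b = 1 →
    f (a • x + b • y) ≤ a * f x + b * f y + ε

lemma ConvexOn.approxConvexOn (hf : ConvexOn ℝ s f) (hε : 0 ≤ ε) : ApproxConvexOn ε s f :=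
  fun _ hx _ hy _ _ ha hb hab => (hf.2 hx hy ha hb hab).trans (le_add_of_nonneg_right hε)

lemma approxConvexOn_of_abs_le (hs : Convex ℝ s) {C : ℝ} (hC : ∀ x ∈ s, |f x| ≤ C) :
    ApproxConvexOn (2 * C) s f := by
  intro x hx y hy a b ha hb hab
  have hx' := mul_le_mul_of_nonneg_left (neg_le_of_abs_le (hC x hx)) ha
  have hy' := mul_le_mul_of_nonneg_left (neg_le_of_abs_le (hC y hy)) hb
  linear_combination le_of_abs_le (hC _ (hs hx hy ha hb hab)) + hx' + hy' + C * hab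

lemma ApproxConvexOn.congr (hs : Convex ℝ s) (hf : ApproxConvexOn ε s f) (hfg : EqOn f g s) :
    ApproxConvexOn ε s g := by
  intro x hx y hy a b ha hb hab
  rw [← hfg hx, ← hfg hy, ← hfg (hs hx hy ha hb hab)]
  exact hf hx hy ha hb hab

lemma ApproxConvexOn.max (hf : ApproxConvexOn ε s f) (hg : ApproxConvexOn ε s g) :
    ApproxConvexOn ε s fun x => max (f x) (g x) := by
  intro x hx y hy a b ha hb hab
  refine max_le ((hf hx hy ha hb hab).trans ?_) ((hg hx hy ha hb hab).trans ?_) <;> gcongr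
  exacts [le_max_left _ _, le_max_left _ _, le_max_right _ _, le_max_right _ _]

lemma ApproxConvexOn.comp_linearMap {t : Set F} (hf : ApproxConvexOn ε s f) (T : F →ₗ[ℝ] E)
    (hT : MapsTo T t s) : ApproxConvexOn ε t (f ∘ T) := by
  intro x hx y hy a b ha hb hab
  simpa only [Function.comp_apply, map_add, map_smul] using hf (hT hx) (hT hy) ha hb hab

lemma ApproxConvexOn.const_add_mul (hf : ApproxConvexOn ε s f) (m : ℝ) {β : ℝ} (hβ : 0 ≤ β) :
    ApproxConvexOn (β * ε) s fun x => m + β * f x := by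
  intro x hx y hy a b ha hb hab
  have := mul_le_mul_of_nonneg_left (hf hx hy ha hb hab) hβ
  linear_combination this - m * hab

lemma convexOn_of_approxConvexOn_tendsto_zero (hs : Convex ℝ s) {ε : ℕ → ℝ}
    (hf : ∀ n, ApproxConvexOn (ε n) s f) (hε : Tendsto ε atTop (𝓝 0)) : ConvexOn ℝ s f := by
  refine ⟨hs, fun x hx y hy a b ha hb hab => ?_⟩
  have hlim : Tendsto (fun n => a * f x + b * f y + ε n) atTop (𝓝 (a • f x + b • f y)) := by
    simpa using hε.const_add (a * f x + b * f y)
  exact ge_of_tendsto' hlim fun n => hf n hx hy ha hb hab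

end ApproxConvex

theorem convexOn_of_eq_max_discounted {E : Type*} [AddCommGroup E] [Module ℝ E] {s : Set E}
    (hs : Convex ℝ s) {L V : E → ℝ} (hL : ConvexOn ℝ s L) (T : E →ₗ[ℝ] E) (hT : MapsTo T s s)
    {β : ℝ} (hβ₀ : 0 ≤ β) (hβ₁ : β < 1) (m : ℝ) {C : ℝ} (hC : ∀ x ∈ s, |V x| ≤ C)
    (hV : ∀ x ∈ s, V x = max (L x) (m + β * V (T x))) : ConvexOn ℝ s V := by
  -- `C` is negative when `s` is empty; `max C 0` keeps the defects nonnegative.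
  set ε₀ := 2 * max C 0
  have hV_approx : ∀ n : ℕ, ApproxConvexOn (β ^ n * ε₀) s V := by
    intro n
    induction n with
    | zero =>
      simpa [ε₀] using approxConvexOn_of_abs_le hs fun x hx => (hC x hx).trans (le_max_left C 0)
    | succ n ih =>
      rw [pow_succ', mul_assoc]
      have hstep := (ih.comp_linearMap T hT).const_add_mul m hβ₀
      exact ((hL.approxConvexOn (by positivity)).max hstep).congr hs fun x hx => (hV x hx).symm
  refine convexOn_of_approxConvexOn_tendsto_zero hs hV_approx ?_
  simpa using (tendsto_pow_atTop_nhds_zero_of_lt_one hβ₀ hβ₁).mul_const ε₀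

lemma Matrix.vecMul_mem_stdSimplex_s3 {n R : Type*} [Fintype n] [DecidableEq n] [CommSemiring R]
    [PartialOrder R] [IsOrderedRing R] {M : Matrix n n R} (hM : M ∈ rowStochastic R n) {x : n → R}
    (hx : x ∈ stdSimplex R n) : x ᵥ* M ∈ stdSimplex R n := by
  refine ⟨nonneg_vecMul_of_mem_rowStochastic hM hx.1, ?_⟩
  rw [← dotProduct_one]
  exact vecMul_dotProduct_one_eq_one_rowStochastic hM ((dotProduct_one x).trans hx.2)

theorem bellman_value_convex_general (K : ℕ)
    (P : Matrix (Fin K) (Fin K) ℝ)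
    (hPnn : ∀ i j, 0 ≤ P i j) (hProw : ∀ i, ∑ j, P i j = 1)
    (B : Fin K → ℝ)
    (β : ℝ) (hβ₀ : 0 < β) (hβ₁ : β < 1) (m : ℝ)
    (V : (Fin K → ℝ) → ℝ)
    (hbd : ∃ C, ∀ ω ∈ stdSimplex ℝ (Fin K), |V ω| ≤ C)
    (hBell : ∀ ω ∈ stdSimplex ℝ (Fin K),
      V ω = max (ω ⬝ᵥ B + β * ∑ k, ω k * V (P k)) (m + β * V (ω ᵥ* P))) :
    ∀ ω₁ ∈ stdSimplex ℝ (Fin K), ∀ ω₂ ∈ stdSimplex ℝ (Fin K),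
      ∀ t : ℝ, 0 ≤ t → t ≤ 1 →
        V (t • ω₁ + (1 - t) • ω₂) ≤ t * V ω₁ + (1 - t) * V ω₂ := by
  intro ω₁ hω₁ ω₂ hω₂ t ht₀ ht₁
  obtain ⟨C, hC⟩ := hbd
  have hΔ := convex_stdSimplex ℝ (Fin K)
  have hP : P ∈ rowStochastic ℝ (Fin K) := mem_rowStochastic_iff_sum.2 ⟨hPnn, hProw⟩
  have hdot (c : Fin K → ℝ) : ConvexOn ℝ (stdSimplex ℝ (Fin K)) (· ⬝ᵥ c) :=
    ((dotProductBilin ℝ ℝ).flip c).convexOn hΔ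
  have hstop : ConvexOn ℝ (stdSimplex ℝ (Fin K)) fun ω => ω ⬝ᵥ B + β * ∑ k, ω k * V (P k) :=
    (hdot B).add ((hdot fun k => V (P k)).smul hβ₀.le)
  have hV := convexOn_of_eq_max_discounted hΔ hstop P.vecMulLinear
    (fun ω hω => vecMul_mem_stdSimplex_s3 hP hω) hβ₀.le hβ₁ m hC hBell
  exact hV.2 hω₁ hω₂ ht₀ (sub_nonneg.2 ht₁) (add_sub_cancel t 1)

/-- A bounded solution of the Bellman equation is convex on the simplex. -/
theorem bellman_value_convex (K : ℕ) (hK : 1 ≤ K)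
    (P : Matrix (Fin K) (Fin K) ℝ)
    (hPnn : ∀ i j, 0 ≤ P i j) (hProw : ∀ i, ∑ j, P i j = 1)
    (B : Fin K → ℝ) (hB : ∀ i, 0 ≤ B i)
    (β : ℝ) (hβ₀ : 0 < β) (hβ₁ : β < 1) (m : ℝ)
    (V : (Fin K → ℝ) → ℝ)
    (hbd : ∃ C, ∀ ω ∈ stdSimplex ℝ (Fin K), |V ω| ≤ C)
    (hBell : ∀ ω ∈ stdSimplex ℝ (Fin K),
      V ω = max (ω ⬝ᵥ B + β * ∑ k, ω k * V (P k)) (m + β * V (ω ᵥ* P))) :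
    ∀ ω₁ ∈ stdSimplex ℝ (Fin K), ∀ ω₂ ∈ stdSimplex ℝ (Fin K),
      ∀ t : ℝ, 0 ≤ t → t ≤ 1 →
        V (t • ω₁ + (1 - t) • ω₂) ≤ t * V ω₁ + (1 - t) * V ω₂ :=
  bellman_value_convex_general K P hPnn hProw B β hβ₀ hβ₁ m V hbd hBell
end

section
/- Suppose that for every m ∈ ℝ, V_m is a bounded function on Δ satisfying the Bellman equation for subsidy m. Then for every fixed ω ∈ Δ, the map m ↦ V_m(ω) is convex on ℝ, nondecreasing, and Lipschitz continuous with constant 1/(1−β): for all m₁, m₂ ∈ ℝ, |V_{m₁}(ω) − V_{m₂}(ω)| ≤ |m₁ − m₂|/(1−β). -/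
/-
Write `T_m V` for the right-hand side of the Bellman equation. Between two subsidies its branches
differ by at most `max 0 (m₁ - m₂)`, and each evaluates `V` at points of the simplex with total
weight `β`. So if `V₁ ≤ T_{m₁} V₁` and `T_{m₂} V₂ ≤ V₂`, then `S = sup (V₁ - V₂)` satisfies
`S ≤ max 0 (m₁ - m₂) + β S`, i.e. `V₁ - V₂ ≤ max 0 (m₁ - m₂) / (1 - β)`; monotonicity and the
Lipschitz bound follow. For convexity, `T` is jointly convex in `(m, V)`, so `a V_x + b V_y` is a
supersolution for the subsidy `a x + b y`, and the same comparison gives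
`V_{a x + b y} ≤ a V_x + b V_y`.
-/

open Matrix Finset Set

lemma le_div_one_sub_of_forall_le_add_mul_sSup {α : Type*} {s : Set α} {g : α → ℝ}
    (hg : BddAbove (g '' s)) {c β : ℝ} (hβ : β < 1)
    (h : ∀ x ∈ s, g x ≤ c + β * sSup (g '' s)) {x : α} (hx : x ∈ s) :
    g x ≤ c / (1 - β) := by
  have hS : sSup (g '' s) ≤ c + β * sSup (g '' s) :=
    csSup_le (Set.Nonempty.image g ⟨x, hx⟩) (forall_mem_image.2 h)
  calc g x ≤ sSup (g '' s) := le_csSup hg (mem_image_of_mem g hx)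
    _ ≤ c / (1 - β) := by rw [le_div_iff₀ (by linarith)]; linarith

lemma sum_mul_le_of_mem_stdSimplex {ι : Type*} [Fintype ι] {ω : ι → ℝ}
    (hω : ω ∈ stdSimplex ℝ ι) {f : ι → ℝ} {M : ℝ} (hf : ∀ k, f k ≤ M) :
    ∑ k, ω k * f k ≤ M :=
  calc ∑ k, ω k * f k ≤ ∑ k, ω k * M :=
        sum_le_sum fun k _ => mul_le_mul_of_nonneg_left (hf k) (hω.1 k)
    _ = M := by rw [← sum_mul, hω.2, one_mul]

namespace Matrix

variable {ι : Type*} [Fintype ι] [DecidableEq ι] {P : Matrix ι ι ℝ}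

lemma row_mem_stdSimplex_of_mem_rowStochastic (hP : P ∈ rowStochastic ℝ ι) (k : ι) :
    P k ∈ stdSimplex ℝ ι :=
  ⟨fun _ => nonneg_of_mem_rowStochastic hP, sum_row_of_mem_rowStochastic hP k⟩

lemma vecMul_mem_stdSimplex_of_mem_rowStochastic (hP : P ∈ rowStochastic ℝ ι)
    {ω : ι → ℝ} (hω : ω ∈ stdSimplex ℝ ι) : ω ᵥ* P ∈ stdSimplex ℝ ι := by
  refine ⟨nonneg_vecMul_of_mem_rowStochastic hP hω.1, ?_⟩
  rw [← dotProduct_one,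
    vecMul_dotProduct_one_eq_one_rowStochastic hP (by rw [dotProduct_one, hω.2])]

end Matrix

section Bellman

variable {ι : Type*} [Fintype ι]

def bellmanOp (P : Matrix ι ι ℝ) (B : ι → ℝ) (β m : ℝ) (V : (ι → ℝ) → ℝ) (ω : ι → ℝ) : ℝ :=
  max (ω ⬝ᵥ B + β * ∑ k, ω k * V (P k)) (m + β * V (ω ᵥ* P))

variable {P : Matrix ι ι ℝ} {B : ι → ℝ} {β : ℝ}

lemma bellmanOp_convexComb_le {a b : ℝ} (ha : 0 ≤ a) (hb : 0 ≤ b) (hab : a + b = 1)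
    (x y : ℝ) (V W : (ι → ℝ) → ℝ) (ω : ι → ℝ) :
    bellmanOp P B β (a * x + b * y) (fun ω' => a * V ω' + b * W ω') ω ≤
      a * bellmanOp P B β x V ω + b * bellmanOp P B β y W ω := by
  have hsum : ∑ k, ω k * (a * V (P k) + b * W (P k)) =
      a * ∑ k, ω k * V (P k) + b * ∑ k, ω k * W (P k) := by
    rw [mul_sum, mul_sum, ← sum_add_distrib]
    exact sum_congr rfl fun k _ => by ring
  have hreward : ω ⬝ᵥ B + β * (a * ∑ k, ω k * V (P k) + b * ∑ k, ω k * W (P k)) =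
      a * (ω ⬝ᵥ B + β * ∑ k, ω k * V (P k)) + b * (ω ⬝ᵥ B + β * ∑ k, ω k * W (P k)) := by
    linear_combination (-(ω ⬝ᵥ B)) * hab
  unfold bellmanOp
  rw [mul_max_of_nonneg _ _ ha, mul_max_of_nonneg _ _ hb, hsum, hreward]
  refine le_of_eq_of_le ?_ max_add_add_le_max_add_max
  congr 1
  ring

variable [DecidableEq ι]

lemma bellmanOp_sub_bellmanOp_le (hP : P ∈ rowStochastic ℝ ι) (hβ : 0 ≤ β) (m₁ m₂ : ℝ)
    {V₁ V₂ : (ι → ℝ) → ℝ} {M : ℝ} (hM : ∀ ω ∈ stdSimplex ℝ ι, V₁ ω - V₂ ω ≤ M)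
    {ω : ι → ℝ} (hω : ω ∈ stdSimplex ℝ ι) :
    bellmanOp P B β m₁ V₁ ω - bellmanOp P B β m₂ V₂ ω ≤ max 0 (m₁ - m₂) + β * M := by
  refine (max_sub_max_le_max _ _ _ _).trans (max_le ?_ ?_)
  · have hrows : ∑ k, ω k * (V₁ (P k) - V₂ (P k)) ≤ M :=
      sum_mul_le_of_mem_stdSimplex hω fun k =>
        hM _ (row_mem_stdSimplex_of_mem_rowStochastic hP k)
    have := mul_le_mul_of_nonneg_left hrows hβ
    simp only [mul_sub, sum_sub_distrib] at this
    linarith [le_max_left 0 (m₁ - m₂)]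
  · have := mul_le_mul_of_nonneg_left
      (hM _ (vecMul_mem_stdSimplex_of_mem_rowStochastic hP hω)) hβ
    linarith [le_max_right 0 (m₁ - m₂)]

lemma sub_le_of_le_bellmanOp_of_bellmanOp_le (hP : P ∈ rowStochastic ℝ ι) (hβ₀ : 0 ≤ β)
    (hβ₁ : β < 1) {m₁ m₂ : ℝ} {V₁ V₂ : (ι → ℝ) → ℝ}
    (hV₁ : BddAbove (V₁ '' stdSimplex ℝ ι)) (hV₂ : BddBelow (V₂ '' stdSimplex ℝ ι))
    (hsub : ∀ ω ∈ stdSimplex ℝ ι, V₁ ω ≤ bellmanOp P B β m₁ V₁ ω)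
    (hsuper : ∀ ω ∈ stdSimplex ℝ ι, bellmanOp P B β m₂ V₂ ω ≤ V₂ ω)
    {ω : ι → ℝ} (hω : ω ∈ stdSimplex ℝ ι) :
    V₁ ω - V₂ ω ≤ max 0 (m₁ - m₂) / (1 - β) := by
  obtain ⟨u, hu⟩ := hV₁
  obtain ⟨l, hl⟩ := hV₂
  have hbdd : BddAbove ((fun ω => V₁ ω - V₂ ω) '' stdSimplex ℝ ι) :=
    ⟨u - l, forall_mem_image.2 fun ω hω =>
      sub_le_sub (hu (mem_image_of_mem _ hω)) (hl (mem_image_of_mem _ hω))⟩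
  refine le_div_one_sub_of_forall_le_add_mul_sSup hbdd hβ₁ (fun ω' hω' => ?_) hω
  have := bellmanOp_sub_bellmanOp_le (B := B) hP hβ₀ m₁ m₂
    (fun ξ hξ => le_csSup hbdd (mem_image_of_mem (fun ω => V₁ ω - V₂ ω) hξ)) hω'
  linarith [hsub ω' hω', hsuper ω' hω']

lemma convexOn_of_forall_eq_bellmanOp (hP : P ∈ rowStochastic ℝ ι) (hβ₀ : 0 ≤ β)
    (hβ₁ : β < 1) {V : ℝ → (ι → ℝ) → ℝ}
    (hV : ∀ m, ∀ ω ∈ stdSimplex ℝ ι, V m ω = bellmanOp P B β m (V m) ω)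
    (hAbove : ∀ m, BddAbove (V m '' stdSimplex ℝ ι))
    (hBelow : ∀ m, BddBelow (V m '' stdSimplex ℝ ι)) {ω : ι → ℝ} (hω : ω ∈ stdSimplex ℝ ι) :
    ConvexOn ℝ univ (fun m => V m ω) := by
  refine ⟨convex_univ, fun x _ y _ a b ha hb hab => ?_⟩
  set W := fun ω => a * V x ω + b * V y ω
  obtain ⟨lx, hlx⟩ := hBelow x
  obtain ⟨ly, hly⟩ := hBelow y
  have hW : BddBelow (W '' stdSimplex ℝ ι) :=
    ⟨a * lx + b * ly, forall_mem_image.2 fun ω hω =>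
      add_le_add (mul_le_mul_of_nonneg_left (hlx (mem_image_of_mem _ hω)) ha)
        (mul_le_mul_of_nonneg_left (hly (mem_image_of_mem _ hω)) hb)⟩
  have hsuper : ∀ ω ∈ stdSimplex ℝ ι, bellmanOp P B β (a * x + b * y) W ω ≤ W ω := by
    intro ω hω
    simp only [W]
    rw [hV x ω hω, hV y ω hω]
    exact bellmanOp_convexComb_le ha hb hab x y (V x) (V y) ω
  have := sub_le_of_le_bellmanOp_of_bellmanOp_le hP hβ₀ hβ₁ (hAbove _) hW
    (fun ω hω => (hV (a * x + b * y) ω hω).le) hsuper hω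
  rw [sub_self, max_self, zero_div, sub_nonpos] at this
  simpa only [smul_eq_mul] using this

end Bellman

theorem bellman_value_in_subsidy_general (K : ℕ)
    (P : Matrix (Fin K) (Fin K) ℝ)
    (hPnn : ∀ i j, 0 ≤ P i j) (hProw : ∀ i, ∑ j, P i j = 1)
    (B : Fin K → ℝ)
    (β : ℝ) (hβ₀ : 0 < β) (hβ₁ : β < 1)
    (V : ℝ → (Fin K → ℝ) → ℝ)
    (hbd : ∀ m : ℝ, ∃ C, ∀ ω ∈ stdSimplex ℝ (Fin K), |V m ω| ≤ C)
    (hBell : ∀ m : ℝ, ∀ ω ∈ stdSimplex ℝ (Fin K),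
      V m ω = max (ω ⬝ᵥ B + β * ∑ k, ω k * V m (P k)) (m + β * V m (ω ᵥ* P))) :
    ∀ ω ∈ stdSimplex ℝ (Fin K),
      ConvexOn ℝ Set.univ (fun m : ℝ => V m ω) ∧
      Monotone (fun m : ℝ => V m ω) ∧
      ∀ m₁ m₂ : ℝ, |V m₁ ω - V m₂ ω| ≤ |m₁ - m₂| / (1 - β) := by
  have hP : P ∈ rowStochastic ℝ (Fin K) := mem_rowStochastic_iff_sum.2 ⟨hPnn, hProw⟩
  have hAbove (m : ℝ) : BddAbove (V m '' stdSimplex ℝ (Fin K)) := by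
    obtain ⟨C, hC⟩ := hbd m
    exact ⟨C, forall_mem_image.2 fun ω hω => (abs_le.1 (hC ω hω)).2⟩
  have hBelow (m : ℝ) : BddBelow (V m '' stdSimplex ℝ (Fin K)) := by
    obtain ⟨C, hC⟩ := hbd m
    exact ⟨-C, forall_mem_image.2 fun ω hω => (abs_le.1 (hC ω hω)).1⟩
  intro ω hω
  have hcmp (m₁ m₂ : ℝ) : V m₁ ω - V m₂ ω ≤ max 0 (m₁ - m₂) / (1 - β) :=
    sub_le_of_le_bellmanOp_of_bellmanOp_le hP hβ₀.le hβ₁ (hAbove m₁) (hBelow m₂)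
      (fun ω hω => (hBell m₁ ω hω).le) (fun ω hω => (hBell m₂ ω hω).ge) hω
  have hlip (m₁ m₂ : ℝ) : max 0 (m₁ - m₂) / (1 - β) ≤ |m₁ - m₂| / (1 - β) :=
    div_le_div_of_nonneg_right (max_le (abs_nonneg _) (le_abs_self _)) (by linarith)
  refine ⟨convexOn_of_forall_eq_bellmanOp hP hβ₀.le hβ₁ hBell hAbove hBelow hω,
    fun m₁ m₂ hm => ?_, fun m₁ m₂ => ?_⟩
  · simpa only [max_eq_left (sub_nonpos.2 hm), zero_div, sub_nonpos] using hcmp m₁ m₂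
  · refine abs_sub_le_iff.2 ⟨(hcmp m₁ m₂).trans (hlip m₁ m₂), (hcmp m₂ m₁).trans ?_⟩
    rw [abs_sub_comm]
    exact hlip m₂ m₁

/-- For a family of bounded Bellman solutions `V_m`, the map `m ↦ V_m(ω)` is, at each
fixed `ω` in the simplex, convex, nondecreasing, and Lipschitz with constant `1/(1−β)`. -/
theorem bellman_value_in_subsidy (K : ℕ) (hK : 1 ≤ K)
    (P : Matrix (Fin K) (Fin K) ℝ)
    (hPnn : ∀ i j, 0 ≤ P i j) (hProw : ∀ i, ∑ j, P i j = 1)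
    (B : Fin K → ℝ) (hB : ∀ i, 0 ≤ B i)
    (β : ℝ) (hβ₀ : 0 < β) (hβ₁ : β < 1)
    (V : ℝ → (Fin K → ℝ) → ℝ)
    (hbd : ∀ m : ℝ, ∃ C, ∀ ω ∈ stdSimplex ℝ (Fin K), |V m ω| ≤ C)
    (hBell : ∀ m : ℝ, ∀ ω ∈ stdSimplex ℝ (Fin K),
      V m ω = max (ω ⬝ᵥ B + β * ∑ k, ω k * V m (P k)) (m + β * V m (ω ᵥ* P))) :
    ∀ ω ∈ stdSimplex ℝ (Fin K),
      ConvexOn ℝ Set.univ (fun m : ℝ => V m ω) ∧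
      Monotone (fun m : ℝ => V m ω) ∧
      ∀ m₁ m₂ : ℝ, |V m₁ ω - V m₂ ω| ≤ |m₁ - m₂| / (1 - β) :=
  bellman_value_in_subsidy_general K P hPnn hProw B β hβ₀ hβ₁ V hbd hBell
end

section
/- Let P be a K×K real row-stochastic matrix with rows p₀,…,p_{K−1}, let B ∈ ℝ^K, let β ∈ (0,1), and let ω ∈ ℝ^K be a probability row vector. Suppose nonnegative integers L(ωP), L(p₀), …, L(p_{K−1}) are given, and define for each such point x: f(x) = (1 − β^{L(x)})/(1 − β) and g(x) = β^{L(x)} · (x P^{L(x)}) (a row vector in ℝ^K). Let F ∈ ℝ^K have entries F_k = f(p_k), let G be the K×K matrix whose k-th row is g(p_k), assume I_K − βG is invertible and set H = (I_K − βG)^{−1}. Assume the denominator D := 1 + β f(ωP) + β (β g(ωP) − ω) H F is nonzero, and define m := ( ω·B − β g(ωP)(I_K + β H G)B + β ω H G B ) / D. Then, setting 𝐕 := H (m F + G B) ∈ ℝ^K, the indifference identity ω·B + β ω·𝐕 = m + β ( f(ωP) m + g(ωP)·B + β g(ωP)·𝐕 ) holds; moreover m is the unique real number m' for which this identity holds with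 𝐕 replaced by H (m' F + G B). -/
/-! Since `𝐕 = H (m' F + G B)` is affine in `m'`, so are both sides of the indifference identity;
collecting terms, the identity at `m'` says exactly `m' * D = N`, where `N` is the numerator in the
closed form of `m`. As `D ≠ 0`, `m = N / D` is its unique solution. -/

open Matrix

theorem dotProduct_mulVec_smul_add_mulVec {R n : Type*} [CommSemiring R] [Fintype n]
    (H G : Matrix n n R) (v F B : n → R) (x : R) :
    v ⬝ᵥ (H *ᵥ (x • F + G *ᵥ B)) = x * ((v ᵥ* H) ⬝ᵥ F) + (v ᵥ* (H * G)) ⬝ᵥ B := by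
  rw [mulVec_add, mulVec_smul, dotProduct_add, dotProduct_smul, dotProduct_mulVec,
    mulVec_mulVec, dotProduct_mulVec, smul_eq_mul]

theorem indifference_iff_mul_eq {R n : Type*} [CommRing R] [Fintype n] [DecidableEq n]
    (H G : Matrix n n R) (ω g F B : n → R) (β f x : R) :
    ω ⬝ᵥ B + β * (ω ⬝ᵥ (H *ᵥ (x • F + G *ᵥ B)))
        = x + β * (f * x + g ⬝ᵥ B + β * (g ⬝ᵥ (H *ᵥ (x • F + G *ᵥ B)))) ↔
      x * (1 + β * f + β * (((β • g - ω) ᵥ* H) ⬝ᵥ F))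
        = ω ⬝ᵥ B - β * ((g ᵥ* (1 + β • (H * G))) ⬝ᵥ B) + β * ((ω ᵥ* (H * G)) ⬝ᵥ B) := by
  have hslope : ((β • g - ω) ᵥ* H) ⬝ᵥ F = β * ((g ᵥ* H) ⬝ᵥ F) - (ω ᵥ* H) ⬝ᵥ F := by
    rw [sub_vecMul, sub_dotProduct, smul_vecMul, smul_dotProduct, smul_eq_mul]
  have hconst : (g ᵥ* (1 + β • (H * G))) ⬝ᵥ B = g ⬝ᵥ B + β * ((g ᵥ* (H * G)) ⬝ᵥ B) := by
    rw [vecMul_add, vecMul_one, add_dotProduct, vecMul_smul, smul_dotProduct, smul_eq_mul]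
  rw [dotProduct_mulVec_smul_add_mulVec, dotProduct_mulVec_smul_add_mulVec, hslope, hconst]
  constructor <;> intro h <;> linear_combination -h

theorem approx_whittle_index_closed_form_general (K : ℕ)
    (B : Fin K → ℝ)
    (β : ℝ)
    (ω : Fin K → ℝ)
    (fωP : ℝ)
    (gωP : Fin K → ℝ)
    (F : Fin K → ℝ)
    (G : Matrix (Fin K) (Fin K) ℝ)
    (H : Matrix (Fin K) (Fin K) ℝ)
    (D : ℝ) (hD : D = 1 + β * fωP + β * (((β • gωP - ω) ᵥ* H) ⬝ᵥ F))
    (hDne : D ≠ 0)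
    (m : ℝ)
    (hm : m = (ω ⬝ᵥ B - β * ((gωP ᵥ* (1 + β • (H * G))) ⬝ᵥ B)
        + β * ((ω ᵥ* (H * G)) ⬝ᵥ B)) / D)
    (Vvec : Fin K → ℝ) (hVvec : Vvec = H *ᵥ (m • F + G *ᵥ B)) :
    (ω ⬝ᵥ B + β * (ω ⬝ᵥ Vvec)
        = m + β * (fωP * m + gωP ⬝ᵥ B + β * (gωP ⬝ᵥ Vvec))) ∧
    ∀ m' : ℝ,
      ω ⬝ᵥ B + β * (ω ⬝ᵥ (H *ᵥ (m' • F + G *ᵥ B)))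
          = m' + β * (fωP * m' + gωP ⬝ᵥ B
              + β * (gωP ⬝ᵥ (H *ᵥ (m' • F + G *ᵥ B)))) →
      m' = m := by
  subst hVvec
  refine ⟨(indifference_iff_mul_eq H G ω gωP F B β fωP m).2 ?_, fun m' hm' => ?_⟩
  · rw [← hD, hm]
    exact div_mul_cancel₀ _ hDne
  · rw [hm, eq_div_iff hDne, hD]
    exact (indifference_iff_mul_eq H G ω gωP F B β fωP m').1 hm'

/-- The closed-form approximate Whittle index: the subsidy `m` given by the
closed-form expression satisfies the indifference identity at `ω` for the
linearized threshold policy, and it is the unique real number doing so. -/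
theorem approx_whittle_index_closed_form (K : ℕ)
    (P : Matrix (Fin K) (Fin K) ℝ)
    (hPnn : ∀ i j, 0 ≤ P i j) (hProw : ∀ i, ∑ j, P i j = 1)
    (B : Fin K → ℝ)
    (β : ℝ) (hβ₀ : 0 < β) (hβ₁ : β < 1)
    (ω : Fin K → ℝ) (hωnn : ∀ i, 0 ≤ ω i) (hωsum : ∑ i, ω i = 1)
    (LωP : ℕ) (L : Fin K → ℕ)
    (fωP : ℝ) (hf : fωP = (1 - β ^ LωP) / (1 - β))
    (gωP : Fin K → ℝ) (hg : gωP = β ^ LωP • ((ω ᵥ* P) ᵥ* P ^ LωP))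
    (F : Fin K → ℝ) (hF : ∀ k, F k = (1 - β ^ L k) / (1 - β))
    (G : Matrix (Fin K) (Fin K) ℝ) (hG : ∀ k, G k = β ^ L k • (P k ᵥ* P ^ L k))
    (hGdet : IsUnit (1 - β • G).det)
    (H : Matrix (Fin K) (Fin K) ℝ) (hH : H = (1 - β • G)⁻¹)
    (D : ℝ) (hD : D = 1 + β * fωP + β * (((β • gωP - ω) ᵥ* H) ⬝ᵥ F))
    (hDne : D ≠ 0)
    (m : ℝ)
    (hm : m = (ω ⬝ᵥ B - β * ((gωP ᵥ* (1 + β • (H * G))) ⬝ᵥ B)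
        + β * ((ω ᵥ* (H * G)) ⬝ᵥ B)) / D)
    (Vvec : Fin K → ℝ) (hVvec : Vvec = H *ᵥ (m • F + G *ᵥ B)) :
    (ω ⬝ᵥ B + β * (ω ⬝ᵥ Vvec)
        = m + β * (fωP * m + gωP ⬝ᵥ B + β * (gωP ⬝ᵥ Vvec))) ∧
    ∀ m' : ℝ,
      ω ⬝ᵥ B + β * (ω ⬝ᵥ (H *ᵥ (m' • F + G *ᵥ B)))
          = m' + β * (fωP * m' + gωP ⬝ᵥ B
              + β * (gωP ⬝ᵥ (H *ᵥ (m' • F + G *ᵥ B)))) →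
      m' = m :=
  approx_whittle_index_closed_form_general K B β ω fωP gωP F G H D hD hDne m hm Vvec hVvec
end

section
/- Let P be a 3×3 real row-stochastic matrix such that the complex matrix obtained from P has a non-real eigenvalue A·(cos θ + i sin θ) with A ∈ (0,1) and θ ∈ (0, 2π) (so sin θ ≠ 0), and such that 1 is an eigenvalue of P. Let ω ∈ ℝ³ be a probability row vector and B ∈ ℝ³, and let h(k) = (ω P^k)·B. Then there exist real numbers a' ≥ 0, b' ∈ [0, 2π) and c' such that for all k ∈ ℕ, h(k) = a' A^k sin(kθ + b') + c'. -/
/-!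
The eigenvalues `1`, `λ = A e^{iθ}` and `λ̄` of the real matrix `P` are distinct (as `λ` is not
real), so they exhaust the spectrum and the characteristic polynomial is `(X - 1)(X - λ)(X - λ̄)`. Since `X^k`
agrees with its Lagrange interpolant at these nodes modulo that polynomial, Cayley–Hamilton gives
`P^k = L₁(P) + λ^k L_λ(P) + λ̄^k L_λ̄(P)`, hence `h(k) = c + Re(u λ^k)` for constants `c` and `u`.
Writing `u` in polar form, `Re(u λ^k) = A^k |u| cos(kθ + arg u) = A^k |u| sin(kθ + arg u + π/2)`.
-/

open Matrix

open Polynomial Lagrange in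
theorem Lagrange.nodal_id_dvd_of_isRoot {K : Type*} [CommRing K] [IsDomain K] (s : Finset K)
    {p : K[X]} (hs : ∀ r ∈ s, p.IsRoot r) : nodal s id ∣ p := by
  rcases eq_or_ne p 0 with rfl | hp
  · exact dvd_zero _
  rw [nodal_eq, Finset.prod_eq_multiset_prod]
  simp only [id]
  rw [Multiset.prod_X_sub_C_dvd_iff_le_roots hp, Multiset.le_iff_subset s.nodup]
  exact fun r hr => (mem_roots hp).2 (hs r hr)

section Eigenvalues

open Polynomial Lagrange

variable {K n : Type*} [Field K] [Fintype n] [DecidableEq n] {M : Matrix n n K} {s : Finset K}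

theorem Matrix.charpoly_eq_nodal (hcard : Fintype.card n ≤ s.card)
    (hs : ∀ r ∈ s, M.charpoly.IsRoot r) : M.charpoly = nodal s id := by
  refine eq_of_monic_of_dvd_of_natDegree_le nodal_monic M.charpoly_monic
    (nodal_id_dvd_of_isRoot s hs) ?_
  rwa [natDegree_nodal, M.charpoly_natDegree_eq_dim]

theorem Matrix.pow_eq_sum_pow_smul_aeval_basis [DecidableEq K] (hcard : Fintype.card n ≤ s.card)
    (hs : ∀ r ∈ s, M.charpoly.IsRoot r) (k : ℕ) :
    M ^ k = ∑ r ∈ s, r ^ k • aeval M (Lagrange.basis s id r) := by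
  have hdvd : M.charpoly ∣ X ^ k - interpolate s id (· ^ k) := by
    rw [charpoly_eq_nodal hcard hs]
    refine nodal_id_dvd_of_isRoot s fun r hr => ?_
    rw [IsRoot, eval_sub, eval_pow, eval_X, sub_eq_zero]
    exact (eval_interpolate_at_node (v := id) (· ^ k) (Set.injOn_id _) hr).symm
  obtain ⟨q, hq⟩ := hdvd
  have hM := congrArg (aeval M) hq
  rw [map_mul, aeval_self_charpoly, zero_mul, map_sub, sub_eq_zero, interpolate_apply] at hM
  simpa [map_sum, Algebra.smul_def] using hM

theorem Matrix.exists_dotProduct_vecMul_pow_eq_sum (hcard : Fintype.card n ≤ s.card)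
    (hs : ∀ r ∈ s, M.charpoly.IsRoot r) (v w : n → K) :
    ∃ c : K → K, ∀ k : ℕ, (v ᵥ* M ^ k) ⬝ᵥ w = ∑ r ∈ s, c r * r ^ k := by
  classical
  refine ⟨fun r => (v ᵥ* aeval M (Lagrange.basis s id r)) ⬝ᵥ w, fun k => ?_⟩
  rw [pow_eq_sum_pow_smul_aeval_basis hcard hs k, vecMul_sum, sum_dotProduct]
  simp [vecMul_smul, smul_dotProduct, mul_comm]

end Eigenvalues

theorem RingHom.map_dotProduct_vecMul {R S m n : Type*} [NonAssocSemiring R]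
    [NonAssocSemiring S] [Fintype m] [Fintype n] (f : R →+* S) (M : Matrix m n R) (v : m → R)
    (w : n → R) :
    f ((v ᵥ* M) ⬝ᵥ w) = ((f ∘ v) ᵥ* M.map f) ⬝ᵥ (f ∘ w) := by
  rw [f.map_dotProduct]
  congr 1
  ext i
  exact f.map_vecMul M v i

section RealMatrix

variable {n : Type*} [Fintype n] [DecidableEq n]

open Polynomial in
theorem Matrix.isRoot_charpoly_map_ofReal_conj (M : Matrix n n ℝ) {z : ℂ}
    (hz : (M.map Complex.ofReal).charpoly.IsRoot z) :
    (M.map Complex.ofReal).charpoly.IsRoot (starRingEnd ℂ z) := by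
  have hmap : (M.map Complex.ofReal).charpoly = M.charpoly.map Complex.ofRealHom :=
    M.charpoly_map Complex.ofRealHom
  have hconj : (starRingEnd ℂ).comp Complex.ofRealHom = Complex.ofRealHom :=
    RingHom.ext Complex.conj_ofReal
  rw [hmap, IsRoot, eval_map] at hz ⊢
  rw [← hconj, ← hom_eval₂, hz, map_zero]

theorem Matrix.exists_dotProduct_vecMul_pow_eq_add_re_mul_pow (M : Matrix n n ℝ)
    (hn : Fintype.card n ≤ 3) {lam : ℂ} (hlam : lam.im ≠ 0)
    (heig : (M.map Complex.ofReal).charpoly.IsRoot lam)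
    (heig1 : (M.map Complex.ofReal).charpoly.IsRoot 1) (v w : n → ℝ) :
    ∃ (c : ℝ) (u : ℂ), ∀ k : ℕ, (v ᵥ* M ^ k) ⬝ᵥ w = c + (u * lam ^ k).re := by
  set mu := starRingEnd ℂ lam
  have h1lam : 1 ≠ lam := fun h => hlam (by simp [← h])
  have h1mu : 1 ≠ mu := fun h => hlam (by simpa [mu] using congrArg Complex.im h)
  have hlammu : lam ≠ mu := fun h => hlam (by
    have := congrArg Complex.im h; simp only [mu, Complex.conj_im] at this; linarith)
  have h1 : (1 : ℂ) ∉ ({lam, mu} : Finset ℂ) := by simp [h1lam, h1mu]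
  have hcard : Fintype.card n ≤ ({1, lam, mu} : Finset ℂ).card := by
    rwa [Finset.card_insert_of_notMem h1, Finset.card_pair hlammu]
  have hroots : ∀ r ∈ ({1, lam, mu} : Finset ℂ), (M.map Complex.ofReal).charpoly.IsRoot r := by
    simp only [Finset.mem_insert, Finset.mem_singleton]
    rintro r (rfl | rfl | rfl)
    exacts [heig1, heig, M.isRoot_charpoly_map_ofReal_conj heig]
  obtain ⟨c, hc⟩ := exists_dotProduct_vecMul_pow_eq_sum hcard hroots
    (Complex.ofReal ∘ v) (Complex.ofReal ∘ w)
  refine ⟨(c 1).re, c lam + starRingEnd ℂ (c mu), fun k => ?_⟩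
  have hk : (((v ᵥ* M ^ k) ⬝ᵥ w : ℝ) : ℂ) = c 1 + (c lam * lam ^ k + c mu * mu ^ k) :=
    calc (((v ᵥ* M ^ k) ⬝ᵥ w : ℝ) : ℂ)
        = (Complex.ofReal ∘ v ᵥ* M.map Complex.ofReal ^ k) ⬝ᵥ (Complex.ofReal ∘ w) := by
          rw [← Complex.ofRealHom_eq_coe, Complex.ofRealHom.map_dotProduct_vecMul, Matrix.map_pow]
          rfl
      _ = c 1 + (c lam * lam ^ k + c mu * mu ^ k) := by
          rw [hc k, Finset.sum_insert h1, Finset.sum_pair hlammu, one_pow, mul_one]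
  have hmu_re : (c mu * mu ^ k).re = (starRingEnd ℂ (c mu) * lam ^ k).re := by
    rw [← Complex.conj_re, map_mul, map_pow, Complex.conj_conj]
  rw [← Complex.ofReal_re ((v ᵥ* M ^ k) ⬝ᵥ w), hk, add_mul]
  simp only [Complex.add_re, hmu_re]

end RealMatrix

open Complex in
theorem Complex.exists_re_mul_exp_mul_I_eq_mul_sin (u : ℂ) :
    ∃ a b : ℝ, 0 ≤ a ∧ 0 ≤ b ∧ b < 2 * Real.pi ∧
      ∀ x : ℝ, (u * exp (x * I)).re = a * Real.sin (x + b) := by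
  set b := toIcoMod Real.two_pi_pos 0 (arg u + Real.pi / 2)
  obtain ⟨hb₀, hb₁⟩ := toIcoMod_mem_Ico' Real.two_pi_pos (arg u + Real.pi / 2)
  have hb : arg u + Real.pi / 2 - b
      = toIcoDiv Real.two_pi_pos 0 (arg u + Real.pi / 2) * (2 * Real.pi) :=
    self_sub_toIcoMod_eq_mul _ _ _
  refine ⟨‖u‖, b, norm_nonneg u, hb₀, hb₁, fun x => ?_⟩
  have hpolar : u * exp (x * I) = ‖u‖ * exp ((x + arg u : ℝ) * I) := by
    conv_lhs => rw [← norm_mul_exp_arg_mul_I u]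
    rw [mul_assoc, ← exp_add]
    push_cast
    ring_nf
  rw [hpolar, re_ofReal_mul, exp_ofReal_mul_I_re, ← Real.sin_add_pi_div_two,
    ← Real.sin_sub_int_mul_two_pi _ (toIcoDiv Real.two_pi_pos 0 (arg u + Real.pi / 2)), ← hb]
  ring_nf

theorem kStepReward_complex_eigs_general (P : Matrix (Fin 3) (Fin 3) ℝ)
    (A θ : ℝ) (hA₀ : 0 < A) (hsin : Real.sin θ ≠ 0)
    (heig : (Matrix.charpoly (P.map Complex.ofReal)).IsRoot
      ((A : ℂ) * ((Real.cos θ : ℂ) + (Real.sin θ : ℂ) * Complex.I)))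
    (heig1 : (Matrix.charpoly (P.map Complex.ofReal)).IsRoot 1)
    (ω : Fin 3 → ℝ)
    (B : Fin 3 → ℝ)
    (h : ℕ → ℝ) (hh : ∀ k : ℕ, h k = (ω ᵥ* P ^ k) ⬝ᵥ B) :
    ∃ a' b' c' : ℝ, 0 ≤ a' ∧ 0 ≤ b' ∧ b' < 2 * Real.pi ∧
      ∀ k : ℕ, h k = a' * A ^ k * Real.sin (k * θ + b') + c' := by
  set lam : ℂ := (A : ℂ) * ((Real.cos θ : ℂ) + (Real.sin θ : ℂ) * Complex.I)
  have hlam_exp : lam = A * Complex.exp (θ * Complex.I) := by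
    simp [lam, Complex.exp_mul_I, ← Complex.ofReal_cos, ← Complex.ofReal_sin]
  have hlam_im : lam.im ≠ 0 := by simpa [lam] using ⟨hA₀.ne', hsin⟩
  obtain ⟨c, u, hcu⟩ := P.exists_dotProduct_vecMul_pow_eq_add_re_mul_pow (by simp) hlam_im
    heig heig1 ω B
  obtain ⟨a, b, ha, hb₀, hb₁, hab⟩ := Complex.exists_re_mul_exp_mul_I_eq_mul_sin u
  refine ⟨a, b, c, ha, hb₀, hb₁, fun k => ?_⟩
  have hpow : lam ^ k = ((A ^ k : ℝ) : ℂ) * Complex.exp ((k * θ : ℝ) * Complex.I) := by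
    rw [hlam_exp, mul_pow, ← Complex.exp_nat_mul]
    push_cast
    ring_nf
  rw [hh, hcu, hpow, mul_left_comm, Complex.re_ofReal_mul, hab]
  ring

/-- If a 3×3 row-stochastic matrix has a non-real eigenvalue `A·(cos θ + i sin θ)`
with `A ∈ (0,1)`, `θ ∈ (0,2π)`, `sin θ ≠ 0`, and `1` is an eigenvalue, then the
k-step reward function has the form `h(k) = a' A^k sin(kθ + b') + c'`. -/
theorem kStepReward_complex_eigs (P : Matrix (Fin 3) (Fin 3) ℝ)
    (hPnn : ∀ i j, 0 ≤ P i j) (hProw : ∀ i, ∑ j, P i j = 1)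
    (A θ : ℝ) (hA₀ : 0 < A) (hA₁ : A < 1)
    (hθ₀ : 0 < θ) (hθ₁ : θ < 2 * Real.pi) (hsin : Real.sin θ ≠ 0)
    (heig : (Matrix.charpoly (P.map Complex.ofReal)).IsRoot
      ((A : ℂ) * ((Real.cos θ : ℂ) + (Real.sin θ : ℂ) * Complex.I)))
    (heig1 : (Matrix.charpoly (P.map Complex.ofReal)).IsRoot 1)
    (ω : Fin 3 → ℝ) (hωnn : ∀ i, 0 ≤ ω i) (hωsum : ∑ i, ω i = 1)
    (B : Fin 3 → ℝ)
    (h : ℕ → ℝ) (hh : ∀ k : ℕ, h k = (ω ᵥ* P ^ k) ⬝ᵥ B) :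
    ∃ a' b' c' : ℝ, 0 ≤ a' ∧ 0 ≤ b' ∧ b' < 2 * Real.pi ∧
      ∀ k : ℕ, h k = a' * A ^ k * Real.sin (k * θ + b') + c' :=
  kStepReward_complex_eigs_general P A θ hA₀ hsin heig heig1 ω B h hh
end

section
/- Let P be a K×K real row-stochastic matrix that is regular, i.e., there exists n ∈ ℕ such that every entry of P^n is strictly positive. Then, over ℂ, the number 1 is a root of the characteristic polynomial of P of multiplicity exactly 1, and every complex root λ ≠ 1 of the characteristic polynomial of P satisfies |λ| < 1. -/
/-!
Write `Q` for `P` viewed as a complex matrix. Being row-stochastic, `Q` does not expand the sup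
norm, so its eigenvalues lie in the closed unit disc, and it has no Jordan block at `1`: for
`(Q - 1)² w = 0` the iterates `Qᴺ w = w + N (Q - 1) w` stay bounded only if `(Q - 1) w = 0`.
Hence the multiplicity of the root `1` is the dimension of the fixed space of `Q`.

If `Q v = μ v` with `|μ| = 1`, take a power `R = Pᵏ` with positive entries and a coordinate `i`
where `|vᵢ|` is maximal. Then `μᵏ vᵢ = (R v)ᵢ` is an average, with positive weights, of the `vⱼ`,
which all lie in the disc of radius `|vᵢ|`; as this average lies on the boundary circle, strict
convexity of the disc forces all `vⱼ` to coincide. So `v` is constant, which forces `μ = 1` and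
shows that the fixed space of `Q` is the line of constant vectors.
-/

open Matrix Module

theorem eq_sum_smul_of_norm_sum_smul_eq {E ι : Type*} [NormedAddCommGroup E]
    [InnerProductSpace ℝ E] {s : Finset ι} {w : ι → ℝ} {z : ι → E} {r : ℝ}
    (hw : ∀ i ∈ s, 0 < w i) (hw₁ : ∑ i ∈ s, w i = 1) (hz : ∀ i ∈ s, ‖z i‖ ≤ r)
    (h : ‖∑ i ∈ s, w i • z i‖ = r) :
    ∀ i ∈ s, z i = ∑ j ∈ s, w j • z j := by
  set m := ∑ j ∈ s, w j • z j
  have hvar : ∑ i ∈ s, w i * ‖z i - m‖ ^ 2 = ∑ i ∈ s, w i * ‖z i‖ ^ 2 - ‖m‖ ^ 2 := by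
    have hinner : ∑ i ∈ s, w i * inner ℝ (z i) m = ‖m‖ ^ 2 := by
      rw [← real_inner_self_eq_norm_sq, sum_inner]
      simp only [real_inner_smul_left]
    simp_rw [norm_sub_sq_real, mul_add, mul_sub, Finset.sum_add_distrib, Finset.sum_sub_distrib,
      ← Finset.sum_mul, hw₁, mul_left_comm _ (2 : ℝ), ← Finset.mul_sum, hinner]
    ring
  have hmean : ∑ i ∈ s, w i * ‖z i‖ ^ 2 ≤ r ^ 2 :=
    calc ∑ i ∈ s, w i * ‖z i‖ ^ 2 ≤ ∑ i ∈ s, w i * r ^ 2 :=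
          Finset.sum_le_sum fun i hi =>
            mul_le_mul_of_nonneg_left (pow_le_pow_left₀ (norm_nonneg _) (hz i hi) 2) (hw i hi).le
      _ = r ^ 2 := by rw [← Finset.sum_mul, hw₁, one_mul]
  have hzero : ∑ i ∈ s, w i * ‖z i - m‖ ^ 2 = 0 :=
    le_antisymm (by rw [hvar, h]; linarith)
      (Finset.sum_nonneg fun i hi => mul_nonneg (hw i hi).le (sq_nonneg _))
  intro i hi
  have hi₀ := (Finset.sum_eq_zero_iff_of_nonneg fun j hj =>
    mul_nonneg (hw j hj).le (sq_nonneg ‖z j - m‖)).mp hzero i hi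
  simpa [(hw i hi).ne', sub_eq_zero] using hi₀

namespace Module.End

theorem norm_le_one_of_hasEigenvector {𝕜 E : Type*} [NormedField 𝕜] [NormedAddCommGroup E]
    [NormedSpace 𝕜 E] {f : End 𝕜 E} (hf : ∀ x, ‖f x‖ ≤ ‖x‖) {μ : 𝕜} {v : E}
    (hv : f.HasEigenvector μ v) : ‖μ‖ ≤ 1 := by
  have h : ‖μ‖ * ‖v‖ ≤ 1 * ‖v‖ := by
    rw [← norm_smul, ← hv.apply_eq_smul, one_mul]
    exact hf v
  exact le_of_mul_le_mul_right h (norm_pos_iff.2 hv.2)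

theorem genEigenspace_two_le_eigenspace_one {𝕜 E : Type*} [RCLike 𝕜] [NormedAddCommGroup E]
    [NormedSpace 𝕜 E] {f : End 𝕜 E} (hf : ∀ x, ‖f x‖ ≤ ‖x‖) :
    f.genEigenspace 1 2 ≤ f.eigenspace 1 := by
  intro w hw
  set v := f w - w
  have hfv : f v = v := by
    have hw₂ := (mem_genEigenspace_nat (k := 2)).1 hw
    simpa [sq, sub_eq_zero, v] using hw₂
  have hpow : ∀ N : ℕ, (f ^ N) w = w + N • v := by
    intro N
    induction N with
    | zero => simp
    | succ N ih =>
      rw [pow_succ', mul_apply, ih, map_add, map_nsmul, hfv, succ_nsmul]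
      simp only [v]; abel
  have hbound : ∀ N : ℕ, (N : ℝ) * ‖v‖ ≤ 2 * ‖w‖ := by
    intro N
    have hfN : ∀ x, ‖(f ^ N) x‖ ≤ ‖x‖ := by
      induction N with
      | zero => simp
      | succ N ih => exact fun x => by rw [pow_succ', mul_apply]; exact (hf _).trans (ih x)
    calc (N : ℝ) * ‖v‖ = ‖(f ^ N) w - w‖ := by
          rw [hpow, add_sub_cancel_left, RCLike.norm_nsmul 𝕜, nsmul_eq_mul]
      _ ≤ ‖(f ^ N) w‖ + ‖w‖ := norm_sub_le _ _
      _ ≤ 2 * ‖w‖ := by linarith [hfN w]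
  have hv : v = 0 := by
    by_contra hv
    have hv' : 0 < ‖v‖ := norm_pos_iff.2 hv
    obtain ⟨N, hN⟩ := exists_nat_gt (2 * ‖w‖ / ‖v‖)
    have := hbound N
    rw [div_lt_iff₀ hv'] at hN
    linarith
  simpa [mem_eigenspace_iff, sub_eq_zero, v] using hv

theorem maxGenEigenspace_eq_eigenspace {K V : Type*} [Field K] [AddCommGroup V] [Module K V]
    {f : End K V} {μ : K} (h : f.genEigenspace μ 2 ≤ f.eigenspace μ) :
    f.maxGenEigenspace μ = f.eigenspace μ := by
  refine le_antisymm ?_ eigenspace_le_maxGenEigenspace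
  have hstab : LinearMap.ker ((f - μ • 1) ^ 1) = LinearMap.ker ((f - μ • 1) ^ (1 + 1)) := by
    refine le_antisymm (LinearMap.ker_le_ker_comp _ _) ?_
    simpa [← genEigenspace_nat, pow_one, eigenspace_def] using h
  rw [← iSup_genEigenspace_eq]
  refine iSup_le fun k => ?_
  rw [genEigenspace_nat, eigenspace_def]
  cases k with
  | zero => simp [one_eq_id]
  | succ k => rw [add_comm, ← ker_pow_constant hstab k, pow_one]

end Module.End

namespace Matrix

variable {n : Type*} [Fintype n]

theorem map_ofReal_mulVec_apply (S : Matrix n n ℝ) (v : n → ℂ) (i : n) :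
    (S.map Complex.ofReal *ᵥ v) i = ∑ j, S i j • v j := by
  simp [mulVec, dotProduct, Complex.real_smul]

variable [DecidableEq n]

theorem norm_map_ofReal_mulVec_le {S : Matrix n n ℝ} (hS : S ∈ rowStochastic ℝ n) (v : n → ℂ) :
    ‖S.map Complex.ofReal *ᵥ v‖ ≤ ‖v‖ := by
  refine (pi_norm_le_iff_of_nonneg (norm_nonneg v)).2 fun i => ?_
  rw [map_ofReal_mulVec_apply]
  calc ‖∑ j, S i j • v j‖ ≤ ∑ j, S i j * ‖v j‖ := by
        refine (norm_sum_le _ _).trans_eq (Finset.sum_congr rfl fun j _ => ?_)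
        rw [norm_smul, Real.norm_of_nonneg (nonneg_of_mem_rowStochastic hS)]
    _ ≤ ∑ j, S i j * ‖v‖ := by
        gcongr with j
        · exact nonneg_of_mem_rowStochastic hS
        · exact norm_le_pi_norm v j
    _ = ‖v‖ := by rw [← Finset.sum_mul, sum_row_of_mem_rowStochastic hS, one_mul]

theorem map_ofReal_mulVec_const {S : Matrix n n ℝ} (hS : S ∈ rowStochastic ℝ n) (c : ℂ) :
    (S.map Complex.ofReal *ᵥ fun _ => c) = fun _ => c := by
  ext i
  rw [map_ofReal_mulVec_apply, ← Finset.sum_smul, sum_row_of_mem_rowStochastic hS, one_smul]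

theorem mul_apply_pos_of_mem_rowStochastic {S T : Matrix n n ℝ} (hS : S ∈ rowStochastic ℝ n)
    (hT : ∀ i j, 0 < T i j) (i j : n) : 0 < (S * T) i j := by
  obtain ⟨k, -, hk⟩ : ∃ k ∈ Finset.univ, (0 : ℝ) < S i k :=
    Finset.exists_lt_of_sum_lt (by simp [sum_row_of_mem_rowStochastic hS])
  exact Finset.sum_pos' (fun l _ => mul_nonneg (nonneg_of_mem_rowStochastic hS) (hT l j).le)
    ⟨k, Finset.mem_univ k, mul_pos hk (hT k j)⟩

theorem exists_eq_const_of_mulVec_eq_smul {R : Matrix n n ℝ} (hR : R ∈ rowStochastic ℝ n)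
    (hpos : ∀ i j, 0 < R i j) {μ : ℂ} (hμ : ‖μ‖ = 1) {v : n → ℂ}
    (hv : R.map Complex.ofReal *ᵥ v = μ • v) : ∃ c, v = fun _ => c := by
  cases isEmpty_or_nonempty n
  · exact ⟨0, Subsingleton.elim _ _⟩
  obtain ⟨i, hi⟩ : ∃ i, ‖v i‖ = ‖v‖ := (IsGreatest.pi_norm v).1
  refine ⟨(R.map Complex.ofReal *ᵥ v) i, funext fun j => ?_⟩
  rw [map_ofReal_mulVec_apply]
  refine eq_sum_smul_of_norm_sum_smul_eq (fun j _ => hpos i j)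
    (sum_row_of_mem_rowStochastic hR i) (fun j _ => norm_le_pi_norm v j) ?_ j (Finset.mem_univ j)
  rw [← map_ofReal_mulVec_apply, hv, Pi.smul_apply, norm_smul, hμ, one_mul, hi]

theorem IsPrimitive.exists_eq_const_of_hasEigenvector {P : Matrix n n ℝ} (hprim : P.IsPrimitive)
    (hP : P ∈ rowStochastic ℝ n) {μ : ℂ} (hμ : ‖μ‖ = 1) {v : n → ℂ}
    (hv : End.HasEigenvector (P.map Complex.ofReal).toLin' μ v) : ∃ c, v = fun _ => c := by
  obtain ⟨k, -, hk⟩ := hprim.exists_pos_pow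
  refine exists_eq_const_of_mulVec_eq_smul (pow_mem hP k) hk (μ := μ ^ k)
    (by rw [norm_pow, hμ, one_pow]) ?_
  rw [show (P ^ k).map Complex.ofReal = (P.map Complex.ofReal) ^ k from
    Matrix.map_pow P Complex.ofRealHom k, ← toLin'_apply, toLin'_pow, hv.pow_apply]

theorem IsPrimitive.eigenspace_toLin'_map_ofReal_one {P : Matrix n n ℝ} (hprim : P.IsPrimitive)
    (hP : P ∈ rowStochastic ℝ n) :
    End.eigenspace (P.map Complex.ofReal).toLin' 1 = ℂ ∙ fun _ => 1 := by
  refine le_antisymm (fun v hv => ?_) ?_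
  · rcases eq_or_ne v 0 with rfl | hv₀
    · exact Submodule.zero_mem _
    obtain ⟨c, rfl⟩ := hprim.exists_eq_const_of_hasEigenvector hP norm_one ⟨hv, hv₀⟩
    exact Submodule.mem_span_singleton.2 ⟨c, by ext; simp⟩
  · rw [Submodule.span_le, Set.singleton_subset_iff, SetLike.mem_coe, End.mem_eigenspace_iff,
      toLin'_apply, map_ofReal_mulVec_const hP, one_smul]

theorem IsPrimitive.eq_one_of_hasEigenvector {P : Matrix n n ℝ} (hprim : P.IsPrimitive)
    (hP : P ∈ rowStochastic ℝ n) {μ : ℂ} (hμ : ‖μ‖ = 1) {v : n → ℂ}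
    (hv : End.HasEigenvector (P.map Complex.ofReal).toLin' μ v) : μ = 1 := by
  obtain ⟨c, rfl⟩ := hprim.exists_eq_const_of_hasEigenvector hP hμ hv
  obtain ⟨i, hc⟩ := Function.ne_iff.1 hv.2
  have hfix := congrFun hv.apply_eq_smul i
  rw [toLin'_apply, map_ofReal_mulVec_const hP, Pi.smul_apply, smul_eq_mul] at hfix
  exact (mul_eq_right₀ hc).1 hfix.symm

end Matrix

/-- Perron–Frobenius for regular row-stochastic matrices: over `ℂ`, the value `1`
is a root of the characteristic polynomial of multiplicity exactly `1`, and every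
other complex root `λ ≠ 1` satisfies `|λ| < 1`. -/
theorem perron_frobenius_regular (K : ℕ) (hK : 1 ≤ K)
    (P : Matrix (Fin K) (Fin K) ℝ)
    (hPnn : ∀ i j, 0 ≤ P i j) (hProw : ∀ i, ∑ j, P i j = 1)
    (hreg : ∃ n : ℕ, ∀ i j, 0 < (P ^ n) i j) :
    (Matrix.charpoly (P.map Complex.ofReal)).rootMultiplicity 1 = 1 ∧
    ∀ lam : ℂ, (Matrix.charpoly (P.map Complex.ofReal)).IsRoot lam → lam ≠ 1 →
      ‖lam‖ < 1 := by
  have hP : P ∈ rowStochastic ℝ (Fin K) := mem_rowStochastic_iff_sum.2 ⟨hPnn, hProw⟩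
  obtain ⟨m, hm⟩ := hreg
  have hprim : P.IsPrimitive :=
    ⟨hPnn, m + 1, m.succ_pos, by rw [pow_succ']; exact mul_apply_pos_of_mem_rowStochastic hP hm⟩
  set f := (P.map Complex.ofReal).toLin'
  have hf : ∀ x, ‖f x‖ ≤ ‖x‖ := norm_map_ofReal_mulVec_le hP
  rw [← charpoly_toLin']
  refine ⟨?_, fun μ hroot hμ₁ => ?_⟩
  · have : Nonempty (Fin K) := ⟨⟨0, hK⟩⟩
    rw [← LinearMap.finrank_maxGenEigenspace_eq, End.maxGenEigenspace_eq_eigenspace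
      (End.genEigenspace_two_le_eigenspace_one hf), hprim.eigenspace_toLin'_map_ofReal_one hP,
      finrank_span_singleton (Function.const_ne_zero.2 one_ne_zero)]
  · obtain ⟨v, hv⟩ := ((End.hasEigenvalue_iff_isRoot_charpoly f μ).2 hroot).exists_hasEigenvector
    exact (End.norm_le_one_of_hasEigenvector hf hv).lt_of_ne
      fun hμ => hμ₁ (hprim.eq_one_of_hasEigenvector hP hμ hv)
end

section
/- Let a < 0, 0 < b < 1, c ∈ ℝ, and define h(k) = a b^k + c for k ∈ ℕ. Let r* ∈ ℝ satisfy a + c ≤ r* < c. Then the set {k ∈ ℕ : h(k) > r*} is nonempty and its least element equals ⌊log_b((c − r*)/(−a))⌋ + 1, where log_b denotes the logarithm in base b. Moreover, if r* ≥ c then h(k) ≤ r* for all k ∈ ℕ. -/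
/-! Since `a < 0`, `h k > r*` says `b ^ k < t` with `t = (c - r*) / (-a) ∈ (0, 1]`; as `b < 1` this is
`log_b t < k`, i.e. `⌊log_b t⌋ < k`, and the least such `k` is `⌊log_b t⌋ + 1 ≥ 1`. -/

open Real

theorem lt_mul_add_iff_lt_div_neg {a c r : ℝ} (ha : a < 0) (x : ℝ) :
    r < a * x + c ↔ x < (c - r) / -a := by
  rw [lt_div_iff₀ (neg_pos.2 ha)]
  constructor <;> intro _ <;> linarith

theorem Real.pow_lt_iff_floor_logb_lt {b t : ℝ} (hb₀ : 0 < b) (hb₁ : b < 1) (ht : 0 < t)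
    (k : ℕ) : b ^ k < t ↔ ⌊logb b t⌋ < k := by
  rw [Int.floor_lt, Int.cast_natCast, logb_lt_iff_lt_rpow_of_base_lt_one hb₀ hb₁ ht,
    rpow_natCast]

theorem Nat.sInf_setOf_intCast_gt (m : ℤ) : ((sInf {k : ℕ | m < k} : ℕ) : ℤ) = (m + 1).toNat := by
  have hleast : IsLeast {k : ℕ | m < k} (m + 1).toNat :=
    ⟨by simp only [Set.mem_ofPred_eq]; omega, fun k (hk : m < k) => by omega⟩
  rw [hleast.csInf_eq]

/-- For `h(k) = a b^k + c` with `a < 0`, `0 < b < 1`: if `a + c ≤ r* < c` then the set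
`{k : h(k) > r*}` is nonempty with least element `⌊log_b((c − r*)/(−a))⌋ + 1`;
and if `r* ≥ c` then `h(k) ≤ r*` for all `k`. -/
theorem first_crossing_geometric (a b c : ℝ) (ha : a < 0) (hb₀ : 0 < b) (hb₁ : b < 1)
    (h : ℕ → ℝ) (hh : ∀ k : ℕ, h k = a * b ^ k + c) (r : ℝ) :
    (a + c ≤ r → r < c →
      {k : ℕ | h k > r}.Nonempty ∧
      ((sInf {k : ℕ | h k > r} : ℕ) : ℤ)
        = ⌊Real.log ((c - r) / (-a)) / Real.log b⌋ + 1) ∧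
    (c ≤ r → ∀ k : ℕ, h k ≤ r) := by
  refine ⟨fun hac hrc => ?_, fun hcr k => ?_⟩
  · have hna : 0 < -a := neg_pos.2 ha
    have ht : 0 < (c - r) / -a := div_pos (by linarith) hna
    have ht₁ : (c - r) / -a ≤ 1 := (div_le_one hna).2 (by linarith)
    have hm : 0 ≤ ⌊logb b ((c - r) / -a)⌋ :=
      Int.floor_nonneg.2 (logb_nonneg_of_base_lt_one hb₀ hb₁ ht ht₁)
    have hset : {k : ℕ | h k > r} = {k : ℕ | ⌊logb b ((c - r) / -a)⌋ < k} := by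
      ext k
      simp only [Set.mem_ofPred_eq, gt_iff_lt, hh, lt_mul_add_iff_lt_div_neg ha,
        pow_lt_iff_floor_logb_lt hb₀ hb₁ ht]
    rw [log_div_log, hset, Nat.sInf_setOf_intCast_gt, Int.toNat_of_nonneg (by omega)]
    exact ⟨⟨(⌊logb b ((c - r) / -a)⌋ + 1).toNat, by simp only [Set.mem_ofPred_eq]; omega⟩, rfl⟩
  · rw [hh]
    linarith [mul_neg_of_neg_of_pos ha (pow_pos hb₀ k)]
end
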